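/- Let p = a/b and q = c/d be Farey neighbours in ℚ∞ with ad − bc = 1 (where a = d(p), b = r(p), c = d(q), d = r(q)), and suppose {p, q, w} is a Farey triple for some w ∈ ℚ∞. Then there exist signs ε, φ ∈ {1, −1} such that w is the element of ℚ∞ represented by the fraction (εa − φc)/(εb − φd). -/

import Mathlib

/-- `ℚ∞ = ℚ ∪ {∞}`, ordered with `∞ = ⊤` as the greatest element. -/
abbrev QInf : Type := WithTop ℚ

/-- The numerator `d(q)` of the reduced representation `q = d(q)/r(q)`; `d(∞) = 1`. -/
def fnum : QInf → ℤ := WithTop.recTopCoe 1 (fun q => q.num)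

/-- The denominator `r(q)` of the reduced representation `q = d(q)/r(q)`; `r(∞) = 0`. -/
def fden : QInf → ℤ := WithTop.recTopCoe 0 (fun q => (q.den : ℤ))

/-- The element of `ℚ∞` represented by the fraction `a / b`: it is `∞` if `b = 0`,
and otherwise the rational number `a / b` (normalized so that the denominator is
positive and the fraction is in lowest terms). -/
def fmk (a b : ℤ) : QInf := if b = 0 then (⊤ : QInf) else (((a : ℚ) / (b : ℚ)) : ℚ)

/-- The Farey distance `Δ(p,q) = |d(p)r(q) - d(q)r(p)|`. -/
def fdist (p q : QInf) : ℤ := |fnum p * fden q - fnum q * fden p|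

/-- `p` and `q` are Farey neighbours if `Δ(p,q) = 1`. -/
def FareyNbr (p q : QInf) : Prop := fdist p q = 1

/-- The Farey sum `p ⊕ q = (d(p) + d(q)) / (r(p) + r(q))`. -/
def fsum (p q : QInf) : QInf := fmk (fnum p + fnum q) (fden p + fden q)

/-- The Farey difference `p ⊖ q = (d(p) - d(q)) / (r(p) - r(q))`. -/
def fdiff (p q : QInf) : QInf := fmk (fnum p - fnum q) (fden p - fden q)

/-- A Farey triple: a three-element subset of `ℚ∞` whose elements are pairwise
Farey neighbours. -/
def IsFareyTriple (s : Set QInf) : Prop := s.ncard = 3 ∧ s.Pairwise FareyNbr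

/-- The element replacing `p` in the mutation of the Farey triple `{p, q, r}` in
direction `p`: it is `q ⊖ r` if `p` lies strictly between `q` and `r`, and `q ⊕ r`
otherwise. -/
def fareyMutEl (p q r : QInf) : QInf :=
  if (q < p ∧ p < r) ∨ (r < p ∧ p < q) then fdiff q r else fsum q r

/-- The mutation of the Farey triple `{p, q, r}` in direction `p`. -/
def fareyMut (p q r : QInf) : Set QInf := {fareyMutEl p q r, q, r}

/-- The complexity `c(q) = |d(q)| + r(q) + |d(q) - r(q)|`. -/
def complexity (x : QInf) : ℤ := |fnum x| + fden x + |fnum x - fden x|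

/-!
The vectors `(a, b)` and `(c, d)` form a basis of `ℤ²` since `a d - b c = 1`, and by Cramer's rule
the coordinates of `(d(w), r(w))` in this basis are the signed Farey determinants of `w` against
`q` and `p`; these are `±1` because `w` is a Farey neighbour of both.
-/

lemma fmk_fnum_fden (w : QInf) : fmk (fnum w) (fden w) = w := by
  induction w using WithTop.recTopCoe with
  | top => simp [fmk, fden]
  | coe r =>
    simp only [fmk, fnum, fden, WithTop.recTopCoe_coe]
    refine (if_neg (show (r.den : ℤ) ≠ 0 by exact_mod_cast r.den_ne_zero)).trans ?_
    push_cast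
    rw [Rat.num_div_den]

lemma FareyNbr.symm {p q : QInf} (h : FareyNbr p q) : FareyNbr q p := by
  rwa [FareyNbr, fdist, abs_sub_comm]

lemma FareyNbr.det_eq_one_or_eq_neg_one {p q : QInf} (h : FareyNbr p q) :
    fnum p * fden q - fnum q * fden p = 1 ∨ fnum p * fden q - fnum q * fden p = -1 :=
  (abs_eq zero_le_one).mp h

lemma cramer_of_det_eq_one {R : Type*} [CommRing R] {a b c d : R} (h : a * d - c * b = 1)
    (x y : R) :
    (x * d - c * y) * a - (x * b - a * y) * c = x ∧
      (x * d - c * y) * b - (x * b - a * y) * d = y :=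
  ⟨by linear_combination x * h, by linear_combination y * h⟩

theorem fareyTriple_third_element_form_general (p q w : QInf)
    (hdet : fnum p * fden q - fnum q * fden p = 1)
    (h1 : FareyNbr p w) (h2 : FareyNbr q w) :
    ∃ ε φ : ℤ, (ε = 1 ∨ ε = -1) ∧ (φ = 1 ∨ φ = -1) ∧
      w = fmk (ε * fnum p - φ * fnum q) (ε * fden p - φ * fden q) := by
  obtain ⟨hnum, hden⟩ := cramer_of_det_eq_one hdet (fnum w) (fden w)
  refine ⟨_, _, h2.symm.det_eq_one_or_eq_neg_one, h1.symm.det_eq_one_or_eq_neg_one, ?_⟩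
  rw [hnum, hden, fmk_fnum_fden]

/-- Let `p = a/b` and `q = c/d` be Farey neighbours with `a d - b c = 1`, where
`a = d(p)`, `b = r(p)`, `c = d(q)`, `d = r(q)`.  If `{p, q, w}` is a Farey triple,
then there are signs `ε, φ ∈ {1, -1}` such that `w` is the element of `ℚ∞`
represented by the fraction `(ε a - φ c) / (ε b - φ d)`. -/
theorem fareyTriple_third_element_form (p q w : QInf)
    (hdet : fnum p * fden q - fnum q * fden p = 1)
    (hwp : w ≠ p) (hwq : w ≠ q)
    (h1 : FareyNbr p w) (h2 : FareyNbr q w) :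
    ∃ ε φ : ℤ, (ε = 1 ∨ ε = -1) ∧ (φ = 1 ∨ φ = -1) ∧
      w = fmk (ε * fnum p - φ * fnum q) (ε * fden p - φ * fden q) :=
  fareyTriple_third_element_form_general p q w hdet h1 h2
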